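/- arXiv:1208.4221 — 2 statements merged into one kernel-verified Lean document; each statement's English description precedes it below -/
import Mathlib

section
/- The matrix d conjugates f₁ and f₂ into the group generated by f₁ and f₂: specifically d⁻¹f₁d and d⁻¹f₂d are again products of powers of f₁ and f₂ (d normalizes ⟨f₁,f₂⟩ ≅ 5²). -/
/-!
The matrix `d` is monomial: row `i` has a single nonzero entry `c i ∈ {±1, ±i}`, in column
`σ i`, where `σ` (`dPerm`) is an involution and `c i * c (σ i) = 1` (`c` is `dCoeff`). Hence
`d * d = 1`, and conjugation by `d` permutes the diagonal of a diagonal matrix by `σ`. With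
`χ` the standard additive character of `ZMod 5`, `f₁` and `f₂` are the diagonal matrices
`χ ∘ e₁` and `χ ∘ e₂` for exponent vectors `e₁, e₂` (`f1Exp`, `f2Exp`), and `f₁ ^ a * f₂ ^ b`
is `χ ∘ (a • e₁ + b • e₂)`. So the theorem reduces to `e₁ ∘ σ = e₁` and
`e₂ ∘ σ = 3 • e₁ + 4 • e₂`, that is, `d⁻¹ f₁ d = f₁` and `d⁻¹ f₂ d = f₁ ^ 3 * f₂ ^ 4`.
The monomial shape of `d` is checked by `decide` on a copy `dZi` of `d` with entries in `ℤ[i]`.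
-/

noncomputable section
open Matrix

def z : ℂ := Complex.exp (2 * Real.pi * Complex.I / 5)

/-- The diagonal matrix `f₁`. -/
def f1 : Matrix (Fin 27) (Fin 27) ℂ := Matrix.diagonal
  ![1,1,1, z,z^2,z^3,z^4, 1,1,1,1, z^3,z,z^4,z^2, z^3,z,z^4,z^2, z,z^2,z^3,z^4, z^2,z^4,z,z^3]

/-- The diagonal matrix `f₂`. -/
def f2 : Matrix (Fin 27) (Fin 27) ℂ := Matrix.diagonal
  ![1,1,1, z^4,z^3,z^2,z, z^4,z^3,z^2,z, z^3,z,z^4,z^2, z,z^2,z^3,z^4, z^3,z,z^4,z^2, 1,1,1,1]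

def I4 : Matrix (Fin 4) (Fin 4) ℂ := 1
def J4 : Matrix (Fin 4) (Fin 4) ℂ := !![0,0,0,1; 0,0,1,0; 0,1,0,0; 1,0,0,0]
def K4 : Matrix (Fin 4) (Fin 4) ℂ := !![0,1,0,0; 0,0,0,1; 1,0,0,0; 0,0,1,0]
def L4 : Matrix (Fin 4) (Fin 4) ℂ := !![0,0,1,0; 1,0,0,0; 0,0,0,1; 0,1,0,0]

/-- The 27×27 block-permutation matrix `ac`: the 3-cycle (1 2 3) on the first
three coordinates, and `K` applied to the six 4-dimensional blocks permuted
by a 6-cycle. -/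
def ac : Matrix (Fin 27) (Fin 27) ℂ := Matrix.of fun i j =>
  if (i : ℕ) < 3 ∧ (j : ℕ) < 3 then (if (j : ℕ) % 3 = ((i : ℕ) + 1) % 3 then 1 else 0)
  else if 3 ≤ (i : ℕ) ∧ 3 ≤ (j : ℕ) then
    (if ((j : ℕ) - 3) / 4 = (((i : ℕ) - 3) / 4 + 4) % 6 then
      K4 ⟨((i : ℕ) - 3) % 4, by omega⟩ ⟨((j : ℕ) - 3) % 4, by omega⟩ else 0)
  else 0

/-- The 4×4 block in block-position `(r, c)` of the matrix `d`. -/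
def dblock : ℕ → ℕ → Matrix (Fin 4) (Fin 4) ℂ := fun r c =>
  if r = 0 ∧ c = 0 then -1
  else if r = 1 ∧ c = 1 then -J4
  else if r = 2 ∧ c = 3 then (-Complex.I) • I4
  else if r = 3 ∧ c = 2 then Complex.I • I4
  else if r = 4 ∧ c = 5 then Complex.I • L4
  else if r = 5 ∧ c = 4 then (-Complex.I) • K4
  else 0

/-- The 27×27 matrix `d`. -/
def d : Matrix (Fin 27) (Fin 27) ℂ := Matrix.of fun i j =>
  if (i : ℕ) < 3 ∨ (j : ℕ) < 3 then
    (if i = j then (if (i : ℕ) = 0 then 1 else -1) else 0)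
  else
    dblock (((i : ℕ) - 3) / 4) (((j : ℕ) - 3) / 4)
      ⟨((i : ℕ) - 3) % 4, by omega⟩ ⟨((j : ℕ) - 3) % 4, by omega⟩

def monomialMatrix {n α : Type*} [DecidableEq n] [Zero α] (σ : n → n) (c : n → α) :
    Matrix n n α :=
  of fun i j => if j = σ i then c i else 0

section monomialMatrix

variable {n α : Type*} [DecidableEq n]

theorem map_monomialMatrix {β : Type*} [Zero α] [Zero β] (σ : n → n) (c : n → α) (f : α → β)
    (hf : f 0 = 0) : (monomialMatrix σ c).map f = monomialMatrix σ (f ∘ c) := by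
  ext i j
  simp only [monomialMatrix, map_apply, of_apply, apply_ite f, hf, Function.comp_apply]

theorem monomialMatrix_id_one [Zero α] [One α] : monomialMatrix id (1 : n → α) = 1 := by
  ext i j
  simp [monomialMatrix, one_apply, eq_comm]

variable [Fintype n]

theorem monomialMatrix_mul [NonUnitalNonAssocSemiring α] (σ τ : n → n) (c c' : n → α) :
    monomialMatrix σ c * monomialMatrix τ c' =
      monomialMatrix (τ ∘ σ) fun i => c i * c' (σ i) := by
  ext i j
  rw [mul_apply, Finset.sum_eq_single (σ i)]
  · simp [monomialMatrix]
  · intro k _ hk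
    simp [monomialMatrix, hk]
  · simp

theorem monomialMatrix_mul_diagonal [CommSemiring α] (σ : n → n) (c w : n → α) :
    monomialMatrix σ c * diagonal w = diagonal (w ∘ σ) * monomialMatrix σ c := by
  ext i j
  by_cases h : j = σ i <;> simp [monomialMatrix, h, mul_comm]

theorem monomialMatrix_inv_mul_diagonal_mul [CommRing α] {σ : n → n} {c : n → α}
    (hσ : Function.Involutive σ) (hc : ∀ i, c i * c (σ i) = 1) (v : n → α) :
    (monomialMatrix σ c)⁻¹ * diagonal v * monomialMatrix σ c = diagonal (v ∘ σ) := by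
  set M := monomialMatrix σ c
  have hMM : M * M = 1 := by
    rw [monomialMatrix_mul, hσ.comp_self, ← monomialMatrix_id_one]
    exact congrArg _ (funext hc)
  have hvM : diagonal v * M = M * diagonal (v ∘ σ) := by
    rw [monomialMatrix_mul_diagonal, Function.comp_assoc, hσ.comp_self, Function.comp_id]
  rw [inv_eq_left_inv hMM, mul_assoc, hvM, ← mul_assoc, hMM, one_mul]

end monomialMatrix

theorem stdAddChar_eq_z_pow (k : ZMod 5) : ZMod.stdAddChar k = z ^ k.val := by
  have hz : ZMod.stdAddChar (1 : ZMod 5) = z := by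
    simpa [z] using ZMod.stdAddChar_coe (N := 5) 1
  rw [← hz, ← AddChar.map_nsmul_eq_pow, nsmul_eq_mul, mul_one, ZMod.natCast_zmod_val]

def f1Exp : Fin 27 → ZMod 5 :=
  ![0,0,0, 1,2,3,4, 0,0,0,0, 3,1,4,2, 3,1,4,2, 1,2,3,4, 2,4,1,3]

def f2Exp : Fin 27 → ZMod 5 :=
  ![0,0,0, 4,3,2,1, 4,3,2,1, 3,1,4,2, 1,2,3,4, 3,1,4,2, 0,0,0,0]

theorem f1_eq_diagonal : f1 = diagonal (ZMod.stdAddChar ∘ f1Exp) := by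
  refine congrArg diagonal (funext fun i => ?_)
  rw [Function.comp_apply, stdAddChar_eq_z_pow]
  fin_cases i <;> simp [f1Exp, ZMod.val_ofNat, ZMod.val_one_eq_one_mod]

theorem f2_eq_diagonal : f2 = diagonal (ZMod.stdAddChar ∘ f2Exp) := by
  refine congrArg diagonal (funext fun i => ?_)
  rw [Function.comp_apply, stdAddChar_eq_z_pow]
  fin_cases i <;> simp [f2Exp, ZMod.val_ofNat, ZMod.val_one_eq_one_mod]

theorem f1_pow_mul_f2_pow (a b : ℕ) :
    f1 ^ a * f2 ^ b = diagonal (ZMod.stdAddChar ∘ (a • f1Exp + b • f2Exp)) := by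
  rw [f1_eq_diagonal, f2_eq_diagonal, diagonal_pow, diagonal_pow, diagonal_mul_diagonal]
  congr 1
  ext i
  simp only [Pi.pow_apply, Function.comp_apply, Pi.add_apply, Pi.smul_apply,
    AddChar.map_add_eq_mul, AddChar.map_nsmul_eq_pow]

def J4Zi : Matrix (Fin 4) (Fin 4) GaussianInt := !![0,0,0,1; 0,0,1,0; 0,1,0,0; 1,0,0,0]
def K4Zi : Matrix (Fin 4) (Fin 4) GaussianInt := !![0,1,0,0; 0,0,0,1; 1,0,0,0; 0,0,1,0]
def L4Zi : Matrix (Fin 4) (Fin 4) GaussianInt := !![0,0,1,0; 1,0,0,0; 0,0,0,1; 0,1,0,0]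

def iZi : GaussianInt := ⟨0, 1⟩

def dblockZi : ℕ → ℕ → Matrix (Fin 4) (Fin 4) GaussianInt := fun r c =>
  if r = 0 ∧ c = 0 then -1
  else if r = 1 ∧ c = 1 then -J4Zi
  else if r = 2 ∧ c = 3 then (-iZi) • 1
  else if r = 3 ∧ c = 2 then iZi • 1
  else if r = 4 ∧ c = 5 then iZi • L4Zi
  else if r = 5 ∧ c = 4 then (-iZi) • K4Zi
  else 0

def dZi : Matrix (Fin 27) (Fin 27) GaussianInt := Matrix.of fun i j =>
  if (i : ℕ) < 3 ∨ (j : ℕ) < 3 then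
    (if i = j then (if (i : ℕ) = 0 then 1 else -1) else 0)
  else
    dblockZi (((i : ℕ) - 3) / 4) (((j : ℕ) - 3) / 4)
      ⟨((i : ℕ) - 3) % 4, by omega⟩ ⟨((j : ℕ) - 3) % 4, by omega⟩

theorem toComplex_iZi : GaussianInt.toComplex iZi = Complex.I := by
  simp [iZi, GaussianInt.toComplex_def']

theorem J4Zi_map_toComplex : J4Zi.map GaussianInt.toComplex = J4 := by
  ext i j; fin_cases i <;> fin_cases j <;> simp [J4Zi, J4]

theorem K4Zi_map_toComplex : K4Zi.map GaussianInt.toComplex = K4 := by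
  ext i j; fin_cases i <;> fin_cases j <;> simp [K4Zi, K4]

theorem L4Zi_map_toComplex : L4Zi.map GaussianInt.toComplex = L4 := by
  ext i j; fin_cases i <;> fin_cases j <;> simp [L4Zi, L4]

theorem dblockZi_map_toComplex (r c : ℕ) :
    (dblockZi r c).map GaussianInt.toComplex = dblock r c := by
  unfold dblockZi dblock
  split_ifs <;>
    simp [Matrix.map_neg, Matrix.map_smul', J4Zi_map_toComplex, K4Zi_map_toComplex,
      L4Zi_map_toComplex, toComplex_iZi, I4]

theorem dZi_map_toComplex : dZi.map GaussianInt.toComplex = d := by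
  ext i j
  simp only [dZi, d, map_apply, of_apply]
  split_ifs <;> simp [← dblockZi_map_toComplex]

def dPerm : Fin 27 → Fin 27 :=
  ![0, 1, 2, 3, 4, 5, 6, 10, 9, 8, 7, 15, 16, 17, 18, 11, 12, 13, 14,
    25, 23, 26, 24, 20, 22, 19, 21]

def dCoeff : Fin 27 → GaussianInt :=
  ![1, -1, -1, -1, -1, -1, -1, -1, -1, -1, -1, -iZi, -iZi, -iZi, -iZi, iZi, iZi, iZi, iZi,
    iZi, iZi, iZi, iZi, -iZi, -iZi, -iZi, -iZi]

theorem dZi_eq_monomialMatrix : dZi = monomialMatrix dPerm dCoeff := by decide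

theorem dPerm_involutive : Function.Involutive dPerm := by
  unfold Function.Involutive; decide

theorem dCoeff_mul_dCoeff_dPerm (i : Fin 27) : dCoeff i * dCoeff (dPerm i) = 1 := by
  revert i; decide

theorem inv_d_mul_diagonal_mul_d (v : Fin 27 → ℂ) :
    d⁻¹ * diagonal v * d = diagonal (v ∘ dPerm) := by
  rw [← dZi_map_toComplex, dZi_eq_monomialMatrix, map_monomialMatrix _ _ _ (map_zero _)]
  refine monomialMatrix_inv_mul_diagonal_mul dPerm_involutive (fun i => ?_) v
  simp only [Function.comp_apply, ← map_mul, dCoeff_mul_dCoeff_dPerm, map_one]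

theorem f1Exp_comp_dPerm : f1Exp ∘ dPerm = f1Exp := by decide

theorem f2Exp_comp_dPerm : f2Exp ∘ dPerm = 3 • f1Exp + 4 • f2Exp := by decide

theorem d_normalizes :
    (∃ a b : ℕ, d⁻¹ * f1 * d = f1 ^ a * f2 ^ b) ∧
    (∃ a b : ℕ, d⁻¹ * f2 * d = f1 ^ a * f2 ^ b) := by
  refine ⟨⟨1, 0, ?_⟩, ⟨3, 4, ?_⟩⟩
  · rw [f1_pow_mul_f2_pow, one_smul, zero_smul, add_zero, f1_eq_diagonal,
      inv_d_mul_diagonal_mul_d, Function.comp_assoc, f1Exp_comp_dPerm]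
  · rw [f1_pow_mul_f2_pow, f2_eq_diagonal, inv_d_mul_diagonal_mul_d, Function.comp_assoc,
      f2Exp_comp_dPerm]
end
end

section
/- The matrix ac conjugates the pair (f₁, f₂): (ac)⁻¹ f₁ (ac) and (ac)⁻¹ f₂ (ac) lie in the group generated by f₁ and f₂, so ac normalizes the elementary abelian group ⟨f₁,f₂⟩ of order 25. -/
noncomputable section
open Matrix

/-! `f1` and `f2` are the diagonal matrices with entries `z ^ e₁ i` and `z ^ e₂ i`, and `ac` is the
permutation matrix of a permutation `σ` of the 27 coordinates. Conjugating a diagonal matrix by a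
permutation matrix permutes its diagonal, so `ac⁻¹ * fₖ * ac = f1 ^ a * f2 ^ b` reduces, since
`z ^ 5 = 1`, to the congruences `eₖ ≡ a • (e₁ ∘ σ) + b • (e₂ ∘ σ) [MOD 5]`; they hold with
`(a, b) = (0, 1)` for `f1` and `(1, 2)` for `f2`. -/

namespace Matrix

variable {n R : Type*} [DecidableEq n] [Fintype n] [CommRing R]

lemma permMatrix_inv (σ : Equiv.Perm n) : (σ.permMatrix R)⁻¹ = σ⁻¹.permMatrix R :=
  inv_eq_left_inv (by rw [← permMatrix_mul, mul_inv_cancel, permMatrix_one])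

lemma permMatrix_inv_mul_diagonal_mul_permMatrix (σ : Equiv.Perm n) (v : n → R) :
    (σ.permMatrix R)⁻¹ * diagonal v * σ.permMatrix R = diagonal (v ∘ σ.symm) := by
  rw [permMatrix_inv, PEquiv.toMatrix_toPEquiv_mul, PEquiv.mul_toMatrix_toPEquiv,
    submatrix_submatrix]
  exact submatrix_diagonal_equiv v σ.symm

lemma permMatrix_inv_mul_diagonal_pow_mul_permMatrix {m : ℕ} {ζ : R} (hζ : ζ ^ m = 1)
    {σ : Equiv.Perm n} {e e₁ e₂ : n → ℕ} {a b : ℕ}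
    (h : ∀ i, e i ≡ a * e₁ (σ i) + b * e₂ (σ i) [MOD m]) :
    (σ.permMatrix R)⁻¹ * diagonal (fun i ↦ ζ ^ e i) * σ.permMatrix R =
      diagonal (fun i ↦ ζ ^ e₁ i) ^ a * diagonal (fun i ↦ ζ ^ e₂ i) ^ b := by
  rw [permMatrix_inv_mul_diagonal_mul_permMatrix, diagonal_pow, diagonal_pow,
    diagonal_mul_diagonal]
  congr 1
  funext i
  simpa [← pow_mul, ← pow_add, mul_comm] using pow_eq_pow_of_modEq (h (σ.symm i)) hζ

end Matrix

lemma z_pow_five : z ^ 5 = 1 := by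
  simpa [z] using (Complex.isPrimitiveRoot_exp 5 (by norm_num)).pow_eq_one

def f1Exponent : Fin 27 → ℕ := ![0,0,0, 1,2,3,4, 0,0,0,0, 3,1,4,2, 3,1,4,2, 1,2,3,4, 2,4,1,3]
def f2Exponent : Fin 27 → ℕ := ![0,0,0, 4,3,2,1, 4,3,2,1, 3,1,4,2, 1,2,3,4, 3,1,4,2, 0,0,0,0]

lemma f1_eq_diagonal_pow : f1 = diagonal fun i ↦ z ^ f1Exponent i := by
  unfold f1; congr 1; funext i; fin_cases i <;> simp [f1Exponent]

lemma f2_eq_diagonal_pow : f2 = diagonal fun i ↦ z ^ f2Exponent i := by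
  unfold f2; congr 1; funext i; fin_cases i <;> simp [f2Exponent]

def acPerm : Equiv.Perm (Fin 27) :=
  Equiv.ofBijective ![1,2,0, 20,22,19,21, 24,26,23,25, 4,6,3,5, 8,10,7,9, 12,14,11,13, 16,18,15,17]
    (by decide)

def K4Perm : Equiv.Perm (Fin 4) := Equiv.ofBijective ![1,3,0,2] (by decide)

lemma K4_eq_permMatrix : K4 = K4Perm.permMatrix ℂ := by
  ext a b; fin_cases a <;> fin_cases b <;> simp [K4, K4Perm]

lemma ac_eq_permMatrix : ac = acPerm.permMatrix ℂ := by
  have hperm : ∀ i j : Fin 27,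
      ((i : ℕ) < 3 ∧ (j : ℕ) < 3 ∧ (j : ℕ) % 3 = ((i : ℕ) + 1) % 3) ∨
      (¬((i : ℕ) < 3 ∧ (j : ℕ) < 3) ∧ 3 ≤ (i : ℕ) ∧ 3 ≤ (j : ℕ) ∧
        ((j : ℕ) - 3) / 4 = (((i : ℕ) - 3) / 4 + 4) % 6 ∧
        K4Perm ⟨((i : ℕ) - 3) % 4, by omega⟩ = ⟨((j : ℕ) - 3) % 4, by omega⟩) ↔
      acPerm i = j := by decide
  ext i j
  simp only [ac, of_apply, K4_eq_permMatrix, PEquiv.toMatrix_apply, Equiv.toPEquiv_apply,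
    Option.mem_some_iff, ← hperm]
  split_ifs <;> tauto

theorem ac_normalizes :
    (∃ a b : ℕ, ac⁻¹ * f1 * ac = f1 ^ a * f2 ^ b) ∧
    (∃ a b : ℕ, ac⁻¹ * f2 * ac = f1 ^ a * f2 ^ b) := by
  rw [ac_eq_permMatrix, f1_eq_diagonal_pow, f2_eq_diagonal_pow]
  exact ⟨⟨0, 1, permMatrix_inv_mul_diagonal_pow_mul_permMatrix z_pow_five (by decide)⟩,
    ⟨1, 2, permMatrix_inv_mul_diagonal_pow_mul_permMatrix z_pow_five (by decide)⟩⟩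
end
end
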